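/- Let Q : ℕ → ℝ satisfy, for powers of two: Q(v) = 7·Q(v/2) + c·v²/B for v > m, and Q(v) = d·(v^{log₂ 7}/(B·M^{(log₂ 7)/2 − 1}) + v²/B) for v ≤ m, where m = n/√p, n ≥ √p, and B, M, c, d > 0. Then Q(n) = O(n^{log₂ 7}/(B·M^{(log₂ 7)/2 − 1}) + p^{(log₂ 7)/2 − 1}·n²/B). -/

import Mathlib

theorem stmt_14 (B M c d : ℝ) (hB : 0 < B) (hM : 0 < M) (hc : 0 < c) (hd : 0 < d) :
    ∃ C : ℝ, 0 < C ∧ ∀ (j K : ℕ), j ≤ K → ∀ Q : ℕ → ℝ,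
      (∀ i : ℕ, K - j ≤ i →
        Q (2 ^ (i + 1)) = 7 * Q (2 ^ i) + c * ((2 : ℝ) ^ (i + 1)) ^ 2 / B) →
      (∀ i : ℕ, i ≤ K - j →
        Q (2 ^ i) = d * (((2 : ℝ) ^ i) ^ (Real.logb 2 7) /
          (B * M ^ (Real.logb 2 7 / 2 - 1)) + ((2 : ℝ) ^ i) ^ 2 / B)) →
      Q (2 ^ K) ≤ C * (((2 : ℝ) ^ K) ^ (Real.logb 2 7) / (B * M ^ (Real.logb 2 7 / 2 - 1)) +
        ((4 : ℝ) ^ j) ^ (Real.logb 2 7 / 2 - 1) * ((2 : ℝ) ^ K) ^ 2 / B) := by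
  set L := Real.logb 2 7 with hLdef
  have h2L : (2:ℝ) ^ L = 7 := Real.rpow_logb (by norm_num) (by norm_num) (by norm_num)
  have hpowL : ∀ i : ℕ, ((2:ℝ)^i) ^ L = 7 ^ i := by
    intro i
    rw [← Real.rpow_natCast 2 i, ← Real.rpow_mul (by norm_num), mul_comm,
        Real.rpow_mul (by norm_num), h2L, Real.rpow_natCast]
  have hpow2 : ∀ i : ℕ, ((2:ℝ)^i) ^ 2 = (4:ℝ) ^ i := by
    intro i; rw [← pow_mul, mul_comm, pow_mul]; norm_num
  have h4a : (4:ℝ) ^ (L/2 - 1) = 7/4 := by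
    have h42 : (4:ℝ) = (2:ℝ) ^ (2:ℝ) := by
      rw [show ((2:ℝ):ℝ) = ((2:ℕ):ℝ) by norm_num, Real.rpow_natCast]; norm_num
    rw [h42, ← Real.rpow_mul (by norm_num)]
    have : (2:ℝ) * (L/2 - 1) = L - 2 := by ring
    rw [this, Real.rpow_sub (by norm_num), h2L]
  have h4aj : ∀ n : ℕ, ((4:ℝ)^n) ^ (L/2 - 1) = (7/4 : ℝ) ^ n := by
    intro n
    rw [← Real.rpow_natCast 4 n, ← Real.rpow_mul (by norm_num), mul_comm,
        Real.rpow_mul (by norm_num), h4a, Real.rpow_natCast]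
  have hMpos : (0:ℝ) < M ^ (L/2 - 1) := Real.rpow_pos_of_pos hM _
  set D : ℝ := B * M ^ (L/2 - 1) with hDdef
  have hD : 0 < D := mul_pos hB hMpos
  refine ⟨d + 4*c/3, by positivity, ?_⟩
  intro j K hjK Q hrec hbase
  set m := K - j with hm
  have key : ∀ t : ℕ, t ≤ j →
      Q (2 ^ (m + t)) = d * 7^(m+t) / D + (d + 4*c/3) * 7^t * 4^m / B
        - (4*c/3) * 4^(m+t) / B := by
    intro t ht
    induction t with
    | zero =>
        have hb := hbase m le_rfl
        rw [hpowL, hpow2] at hb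
        rw [add_zero] at *
        rw [hb]; ring
    | succ t ih =>
        have ih' := ih (le_of_lt (Nat.lt_of_succ_le ht))
        have hr := hrec (m + t) (Nat.le_add_right m t)
        rw [hpow2] at hr
        rw [show m + (t+1) = (m+t) + 1 from rfl, hr, ih']
        rw [pow_succ (7:ℝ) (m+t), pow_succ (7:ℝ) t, pow_succ (4:ℝ) (m+t)]
        field_simp
        ring
  have hfin := key j le_rfl
  rw [hm, Nat.sub_add_cancel hjK] at hfin
  rw [hpowL, hpow2, h4aj]
  have h4K : (4:ℝ) ^ K = 4 ^ m * 4 ^ j := by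
    rw [← pow_add, hm, Nat.sub_add_cancel hjK]
  have hswap : (7:ℝ)^j * 4^m = (7/4 : ℝ)^j * 4^K := by
    rw [h4K, div_pow]
    field_simp
  have P1 : (0:ℝ) < 7^K / D := by positivity
  have P2 : (0:ℝ) < 4^K / B := by positivity
  have hx : (0:ℝ) ≤ (7/4:ℝ)^j * 4^K / B := by positivity
  rw [hfin]
  have : (d + 4*c/3) * 7^j * 4^m / B = (d + 4*c/3) * ((7/4:ℝ)^j * 4^K / B) := by
    rw [mul_assoc, hswap]; ring
  rw [this]
  have hdC : d * 7^K / D ≤ (d + 4*c/3) * (7^K / D) := by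
    rw [mul_div_assoc]
    apply mul_le_mul_of_nonneg_right _ (le_of_lt P1)
    linarith
  have hneg : (0:ℝ) ≤ (4*c/3) * 4^K / B := by positivity
  nlinarith [hdC, hneg]
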